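/- arXiv:1701.07551 — 2 statements merged into one kernel-verified Lean document; each statement's English description precedes it below -/
import Mathlib

section
/- Let √3 denote the positive real square root of 3. Let x, y be real numbers with x ≠ 0, y ≠ −2, x³ ≠ 2(5 − 3√3), and set w = −2(y − 1)/(y + 2); assume also w³ ≠ 2(5 + 3√3). Then −((5 + 3√3)w³ + 4)/(w³ − 2(5 + 3√3)) = 4/x³ if and only if w³ = 2((5 − 3√3)x³ + 4)/(x³ − 2(5 − 3√3)). -/
theorem stmt_7 (x y : ℝ) (hx : x ≠ 0) (hy : y ≠ -2)
    (hx3 : x ^ 3 ≠ 2 * (5 - 3 * Real.sqrt 3)) :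
    let w : ℝ := -2 * (y - 1) / (y + 2)
    w ^ 3 ≠ 2 * (5 + 3 * Real.sqrt 3) →
      (-(((5 + 3 * Real.sqrt 3) * w ^ 3 + 4) / (w ^ 3 - 2 * (5 + 3 * Real.sqrt 3))) = 4 / x ^ 3 ↔
        w ^ 3 = 2 * ((5 - 3 * Real.sqrt 3) * x ^ 3 + 4) / (x ^ 3 - 2 * (5 - 3 * Real.sqrt 3))) := by
  intro w hw
  have hs : Real.sqrt 3 ^ 2 = 3 := Real.sq_sqrt (by norm_num)
  have hspos : (0:ℝ) < Real.sqrt 3 := Real.sqrt_pos.mpr (by norm_num)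
  have hx3' : x ^ 3 ≠ 0 := pow_ne_zero 3 hx
  have h1 : w ^ 3 - 2 * (5 + 3 * Real.sqrt 3) ≠ 0 := sub_ne_zero.mpr hw
  have h2 : x ^ 3 - 2 * (5 - 3 * Real.sqrt 3) ≠ 0 := sub_ne_zero.mpr hx3
  have h5 : (5 + 3 * Real.sqrt 3 : ℝ) ≠ 0 := by positivity
  rw [← neg_div, div_eq_div_iff h1 hx3', eq_div_iff h2]
  constructor
  · intro h
    linear_combination ((5 - 3*Real.sqrt 3)/2) * h + (36 - (9/2) * w^3 * x^3) * hs
  · intro h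
    linear_combination (-(5 + 3*Real.sqrt 3)) * h + 18 * (w^3 + x^3) * hs
end

section
/- Let √3 denote the positive real square root of 3. Let x, y be real numbers with x ≠ −2, y ≠ −2 and x³ ≠ 2(5 − 3√3), and set X = (2x − 2)/(x + 2) and Y = (2y − 2)/(y + 2). Then 4(X + 1)³ + (5 − 3√3)(X − 2)³ ≠ 0, and the equation (−2(y − 1)/(y + 2))³ = 2((5 − 3√3)x³ + 4)/(x³ − 2(5 − 3√3)) holds if and only if Y³ = (−8(5 − 3√3)(X + 1)³ + 4(X − 2)³)/(4(X + 1)³ + (5 − 3√3)(X − 2)³). -/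
theorem stmt_8 (x y : ℝ) (hx : x ≠ -2) (hy : y ≠ -2)
    (hx3 : x ^ 3 ≠ 2 * (5 - 3 * Real.sqrt 3)) :
    let X : ℝ := (2 * x - 2) / (x + 2)
    let Y : ℝ := (2 * y - 2) / (y + 2)
    4 * (X + 1) ^ 3 + (5 - 3 * Real.sqrt 3) * (X - 2) ^ 3 ≠ 0 ∧
      ((-2 * (y - 1) / (y + 2)) ^ 3 =
          2 * ((5 - 3 * Real.sqrt 3) * x ^ 3 + 4) / (x ^ 3 - 2 * (5 - 3 * Real.sqrt 3)) ↔
        Y ^ 3 =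
          (-8 * (5 - 3 * Real.sqrt 3) * (X + 1) ^ 3 + 4 * (X - 2) ^ 3) /
            (4 * (X + 1) ^ 3 + (5 - 3 * Real.sqrt 3) * (X - 2) ^ 3)) := by
  intro X Y
  set s : ℝ := 5 - 3 * Real.sqrt 3 with hs
  have h2 : x + 2 ≠ 0 := fun h => hx (by linarith)
  have hy2 : y + 2 ≠ 0 := fun h => hy (by linarith)
  have hd : x ^ 3 - 2 * s ≠ 0 := sub_ne_zero.mpr hx3
  have hden : 4 * (X + 1) ^ 3 + s * (X - 2) ^ 3
      = 108 * (x ^ 3 - 2 * s) / (x + 2) ^ 3 := by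
    simp only [X]
    field_simp
    ring
  have hne : 4 * (X + 1) ^ 3 + s * (X - 2) ^ 3 ≠ 0 := by
    rw [hden]
    exact div_ne_zero (mul_ne_zero (by norm_num) hd) (pow_ne_zero 3 h2)
  refine ⟨hne, ?_⟩
  have hnum : -8 * s * (X + 1) ^ 3 + 4 * (X - 2) ^ 3
      = -216 * (s * x ^ 3 + 4) / (x + 2) ^ 3 := by
    simp only [X]
    field_simp
    ring
  have key : (-8 * s * (X + 1) ^ 3 + 4 * (X - 2) ^ 3) /
      (4 * (X + 1) ^ 3 + s * (X - 2) ^ 3) = -2 * (s * x ^ 3 + 4) / (x ^ 3 - 2 * s) := by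
    rw [hnum, hden]
    rw [div_div_div_comm]
    rw [div_self (pow_ne_zero 3 h2), div_one]
    rw [div_eq_div_iff (mul_ne_zero (by norm_num) hd) hd]
    ring
  rw [key]
  have hYneg : (-2 * (y - 1) / (y + 2)) ^ 3 = -(Y ^ 3) := by
    simp only [Y]
    ring
  rw [hYneg]
  constructor <;> intro h <;> linear_combination -h
end
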